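/- For every integer n ≥ 2 and every z > 0, d_n(z) ≤ d_{n−2}(z), i.e. i_n(z) k_n(z) ≤ i_{n−2}(z) k_{n−2}(z). (Monotonicity in the order of the product of modified Bessel functions I_{ν}(z) K_{ν}(z) along half-integer orders, used in the inductive step of the proof of the main theorem.) -/

import Mathlib

open Real Filter MeasureTheory

/-- Modified spherical Bessel functions of the first kind:
`i_0(z) = sinh z / z`, `i_1(z) = cosh z / z - sinh z / z²`,
`i_{n+1}(z) = i_{n-1}(z) - ((2n+1)/z) i_n(z)`. -/
noncomputable def sbI : ℕ → ℝ → ℝ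
  | 0 => fun z => Real.sinh z / z
  | 1 => fun z => Real.cosh z / z - Real.sinh z / z ^ 2
  | (n + 2) => fun z => sbI n z - ((2 * (n + 1 : ℝ) + 1) / z) * sbI (n + 1) z

/-- Modified spherical Bessel functions of the second kind:
`k_0(z) = e^{-z}/z`, `k_1(z) = e^{-z}(1/z + 1/z²)`,
`k_{n+1}(z) = k_{n-1}(z) + ((2n+1)/z) k_n(z)`. -/
noncomputable def sbK : ℕ → ℝ → ℝ
  | 0 => fun z => Real.exp (-z) / z
  | 1 => fun z => Real.exp (-z) * (1 / z + 1 / z ^ 2)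
  | (n + 2) => fun z => sbK n z + ((2 * (n + 1 : ℝ) + 1) / z) * sbK (n + 1) z

/-- `d_n(z) = z i_n(z) k_n(z) = I_{n+1/2}(z) K_{n+1/2}(z)`. -/
noncomputable def dCoef (n : ℕ) (z : ℝ) : ℝ := z * sbI n z * sbK n z

lemma sbK_rec (n : ℕ) (z : ℝ) :
    sbK (n + 2) z = sbK n z + ((2 * (n + 1 : ℝ) + 1) / z) * sbK (n + 1) z := rfl

lemma sbK_pos {z : ℝ} (hz : 0 < z) : ∀ n, 0 < sbK n z := by
  have h0 : 0 < sbK 0 z := by simp only [sbK]; positivity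
  have h1 : 0 < sbK 1 z := by simp only [sbK]; positivity
  have key : ∀ n, 0 < sbK n z ∧ 0 < sbK (n+1) z := by
    intro n
    induction n with
    | zero => exact ⟨h0, h1⟩
    | succ k ih =>
      refine ⟨ih.2, ?_⟩
      rw [sbK_rec]
      have : (0:ℝ) < (2 * (k + 1 : ℝ) + 1) / z := by positivity
      nlinarith [ih.1, ih.2]
  exact fun n => (key n).1

noncomputable def sq2 (c z : ℝ) : ℝ := Real.sqrt (c^2 + z^2)

lemma sq2_sq {c z : ℝ} : (sq2 c z)^2 = c^2 + z^2 := Real.sq_sqrt (by positivity)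

lemma sq2_nonneg {c z : ℝ} : 0 ≤ sq2 c z := Real.sqrt_nonneg _

lemma sq2_pos {c z : ℝ} (hz : 0 < z) : 0 < sq2 c z := by
  have h := sq2_sq (c := c) (z := z)
  nlinarith [sq2_nonneg (c := c) (z := z)]

lemma sq2_ge_z {c z : ℝ} (hz : 0 < z) : z ≤ sq2 c z := by
  have h := sq2_sq (c := c) (z := z)
  nlinarith [sq2_nonneg (c := c) (z := z)]

lemma sq2_mono {c c' z : ℝ} (hc : 0 ≤ c) (h : c ≤ c') : sq2 c z ≤ sq2 c' z := by
  apply Real.sqrt_le_sqrt; nlinarith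

/-- pure algebra: upward fixed-point step -/
lemma fp_up (z σ s k0 k1 k2 : ℝ) (hz : 0 < z) (hk0 : 0 < k0) (hk1 : 0 < k1)
    (hs : s^2 = σ^2 + z^2) (hsp : 0 < s) (hσ : 0 < σ)
    (hrec : z*k2 = z*k0 + 2*σ*k1) (hL : z*k1 ≤ (σ+s)*k0) :
    (σ+s)*k1 ≤ z*k2 := by
  have hpos : 0 < σ + s := by linarith
  have key : (σ+s)*((σ+s)*k1) ≤ (σ+s)*(z*k2) := by
    rw [hrec]
    have h2 : z*(z*k1) ≤ z*((σ+s)*k0) := by nlinarith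
    nlinarith
  exact le_of_mul_le_mul_left key hpos

/-- pure algebra: downward fixed-point step -/
lemma fp_down (z σ0 s0 s2 k0 k1 k2 : ℝ) (hz : 0 < z) (hk1 : 0 < k1)
    (hs0 : s0^2 = σ0^2 + z^2) (hs0p : 0 < s0) (hσ0 : 0 ≤ σ0) (hs02 : s0 ≤ s2)
    (hrec : z*k2 = z*k0 + 2*(σ0+1)*k1) (hU : (σ0+s0)*k0 ≤ z*k1) :
    z*k2 ≤ ((σ0+2)+s2)*k1 := by
  have hpos : 0 < σ0 + s0 := by linarith
  have key : (σ0+s0)*(z*k2) ≤ (σ0+s0)*(((σ0+2)+s2)*k1) := by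
    rw [hrec]
    have h2 : z*((σ0+s0)*k0) ≤ z*(z*k1) := by nlinarith
    have halg : z^2 ≤ (σ0+s0)*(s2-σ0) := by nlinarith
    nlinarith
  exact le_of_mul_le_mul_left key hpos

lemma sbK_ratio {z : ℝ} (hz : 0 < z) : ∀ q : ℕ,
    ((q + 1/2 : ℝ) + sq2 ((q:ℝ) + 1/2) z) * sbK q z ≤ z * sbK (q+1) z ∧
    z * sbK (q+1) z ≤ ((q + 3/2 : ℝ) + sq2 ((q:ℝ) + 3/2) z) * sbK q z := by
  intro q
  induction q with
  | zero =>
    have he : 0 < Real.exp (-z) := Real.exp_pos _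
    have e0 : sbK 0 z = Real.exp (-z) / z := rfl
    have e1 : sbK 1 z = Real.exp (-z) * (1 / z + 1 / z ^ 2) := rfl
    have key : z * sbK 1 z = (z+1) * sbK 0 z := by
      rw [e0, e1]; field_simp
    constructor
    · have hs : sq2 ((0:ℕ) + 1/2 : ℝ) z ≤ z + 1/2 := by
        have h := sq2_sq (c := ((0:ℕ)+1/2:ℝ)) (z := z)
        nlinarith [sq2_nonneg (c := ((0:ℕ)+1/2:ℝ)) (z := z)]
      rw [key]
      have hk0 : 0 < sbK 0 z := by rw [e0]; positivity
      have h1 : ((0:ℕ) + 1/2 : ℝ) + sq2 ((0:ℕ) + 1/2 : ℝ) z ≤ z + 1 := by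
        push_cast at hs ⊢; linarith
      nlinarith
    · have hs : z - 1/2 ≤ sq2 ((0:ℕ) + 3/2 : ℝ) z := by
        have h := sq2_sq (c := ((0:ℕ)+3/2:ℝ)) (z := z)
        nlinarith [sq2_nonneg (c := ((0:ℕ)+3/2:ℝ)) (z := z)]
      rw [key]
      have hk0 : 0 < sbK 0 z := by rw [e0]; positivity
      have h1 : z + 1 ≤ ((0:ℕ) + 3/2 : ℝ) + sq2 ((0:ℕ) + 3/2 : ℝ) z := by
        push_cast at hs ⊢; linarith
      nlinarith
  | succ q ih =>
    obtain ⟨hU, hL⟩ := ih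
    have hk0 := sbK_pos hz q
    have hk1 := sbK_pos hz (q+1)
    have hrec : z * sbK (q+2) z = z * sbK q z + 2*((q:ℝ)+3/2) * sbK (q+1) z := by
      rw [sbK_rec]; field_simp; ring
    have hc1 : ((q+1:ℕ):ℝ) + 1/2 = (q:ℝ) + 3/2 := by push_cast; ring
    have hc2 : ((q+1:ℕ):ℝ) + 3/2 = ((q:ℝ)+1/2) + 2 := by push_cast; ring
    constructor
    · rw [hc1]
      exact fp_up z ((q:ℝ)+3/2) (sq2 ((q:ℝ)+3/2) z) (sbK q z) (sbK (q+1) z) (sbK (q+2) z)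
        hz hk0 hk1 sq2_sq (sq2_pos hz) (by positivity) hrec hL
    · rw [hc2]
      have hrec' : z * sbK (q+2) z = z * sbK q z + 2*(((q:ℝ)+1/2)+1) * sbK (q+1) z := by
        rw [hrec]; ring_nf
      have hmono : sq2 ((q:ℝ)+1/2) z ≤ sq2 (((q:ℝ)+1/2)+2) z := sq2_mono (by positivity) (by linarith)
      have := fp_down z ((q:ℝ)+1/2) (sq2 ((q:ℝ)+1/2) z) (sq2 (((q:ℝ)+1/2)+2) z)
        (sbK q z) (sbK (q+1) z) (sbK (q+2) z)
        hz hk1 sq2_sq (sq2_pos hz) (by positivity) hmono hrec' hU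
      exact this

lemma sbI_rec (n : ℕ) (z : ℝ) :
    sbI (n + 2) z = sbI n z - ((2 * (n + 1 : ℝ) + 1) / z) * sbI (n + 1) z := rfl

noncomputable def muI (n : ℕ) (z : ℝ) : ℝ := ∫ t in (-1:ℝ)..1, Real.exp (z*t) * (1-t^2)^n

lemma cont_integrand (n : ℕ) (z : ℝ) : Continuous (fun t : ℝ => Real.exp (z*t) * (1-t^2)^n) := by
  continuity

lemma muI_pos (n : ℕ) (z : ℝ) : 0 < muI n z := by
  apply intervalIntegral.intervalIntegral_pos_of_pos_on
    ((cont_integrand n z).intervalIntegrable _ _)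
  · intro x hx
    have h1 : x^2 < 1 := by nlinarith [hx.1, hx.2]
    have : (0:ℝ) < 1 - x^2 := by linarith
    positivity
  · norm_num

lemma muI_zero {z : ℝ} (hz : 0 < z) : muI 0 z = (Real.exp z - Real.exp (-z))/z := by
  have hder : ∀ t ∈ Set.uIcc (-1:ℝ) 1, HasDerivAt (fun t : ℝ => Real.exp (z*t)/z)
      (Real.exp (z*t) * (1-t^2)^0) t := by
    intro t _
    have h : HasDerivAt (fun t : ℝ => z*t) z t := by
      simpa using (hasDerivAt_id t).const_mul z
    have := (h.exp).div_const z
    simpa [mul_comm, mul_div_assoc, hz.ne'] using this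
  have := intervalIntegral.integral_eq_sub_of_hasDerivAt hder
    ((cont_integrand 0 z).intervalIntegrable _ _)
  rw [muI, this]
  norm_num
  ring

lemma muI_one {z : ℝ} (hz : 0 < z) :
    muI 1 z = 4*Real.cosh z/z^2 - 4*Real.sinh z/z^3 := by
  have hder : ∀ t ∈ Set.uIcc (-1:ℝ) 1, HasDerivAt
      (fun t : ℝ => Real.exp (z*t) * ((1-t^2)/z + 2*t/z^2 - 2/z^3))
      (Real.exp (z*t) * (1-t^2)^1) t := by
    intro t _
    have hzt : HasDerivAt (fun t : ℝ => z*t) z t := by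
      simpa using (hasDerivAt_id t).const_mul z
    have hb : HasDerivAt (fun t : ℝ => 1 - t^2) (-(2*t)) t := by
      simpa using (hasDerivAt_pow 2 t).const_sub 1
    have hg : HasDerivAt (fun t : ℝ => (1-t^2)/z + 2*t/z^2 - 2/z^3)
        ((-(2*t))/z + 2/z^2) t := by
      have h1 := hb.div_const z
      have h2 : HasDerivAt (fun t : ℝ => 2*t/z^2) (2/z^2) t := by
        simpa [mul_div_assoc] using ((hasDerivAt_id t).const_mul 2).div_const (z^2)
      simpa using (h1.add h2).sub_const (2/z^3)
    have := (hzt.exp).fun_mul hg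
    refine this.congr_deriv ?_
    field_simp
    ring
  have := intervalIntegral.integral_eq_sub_of_hasDerivAt hder
    ((cont_integrand 1 z).intervalIntegrable _ _)
  rw [muI, this, Real.cosh_eq, Real.sinh_eq]
  field_simp
  ring

lemma muI_rec (n : ℕ) (z : ℝ) :
    ((2*(n:ℝ)+4)*(2*n+2))*muI n z = ((2*(n:ℝ)+4)*(2*n+3))*muI (n+1) z + z^2*muI (n+2) z := by
  have hder : ∀ t ∈ Set.uIcc (-1:ℝ) 1, HasDerivAt
      (fun t : ℝ => Real.exp (z*t) * ((2*(n:ℝ)+4)*t*(1-t^2)^(n+1) + z*(1-t^2)^(n+2)))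
      (z^2*(Real.exp (z*t)*(1-t^2)^(n+2)) + ((2*(n:ℝ)+4)*(2*n+3))*(Real.exp (z*t)*(1-t^2)^(n+1))
        - ((2*(n:ℝ)+4)*(2*n+2))*(Real.exp (z*t)*(1-t^2)^n)) t := by
    intro t _
    have hzt : HasDerivAt (fun t : ℝ => z*t) z t := by
      simpa using (hasDerivAt_id t).const_mul z
    have hb : HasDerivAt (fun t : ℝ => 1 - t^2) (-(2*t)) t := by
      simpa using (hasDerivAt_pow 2 t).const_sub 1
    have hp1 : HasDerivAt (fun t : ℝ => (1-t^2)^(n+1))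
        ((n+1)*(1-t^2)^n * (-(2*t))) t := by
      simpa using hb.fun_pow (n+1)
    have hp2 : HasDerivAt (fun t : ℝ => (1-t^2)^(n+2))
        ((n+2)*(1-t^2)^(n+1) * (-(2*t))) t := by
      simpa using hb.fun_pow (n+2)
    have ht : HasDerivAt (fun t : ℝ => (2*(n:ℝ)+4)*t) (2*(n:ℝ)+4) t := by
      simpa using (hasDerivAt_id t).const_mul (2*(n:ℝ)+4)
    have hg : HasDerivAt (fun t : ℝ => (2*(n:ℝ)+4)*t*(1-t^2)^(n+1) + z*(1-t^2)^(n+2))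
        ((2*(n:ℝ)+4)*(1-t^2)^(n+1) + (2*(n:ℝ)+4)*t*((n+1)*(1-t^2)^n * (-(2*t)))
          + z*((n+2)*(1-t^2)^(n+1) * (-(2*t)))) t := by
      have := (ht.mul hp1).add (hp1.const_mul z)
      -- careful: need z * p2 term
      exact (ht.mul hp1).add (hp2.const_mul z)
    have := (hzt.exp).fun_mul hg
    refine this.congr_deriv ?_
    have hsq : (1:ℝ) - t^2 = (1-t^2) := rfl
    -- both sides polynomial in t and exp(z*t), with t^2 = 1 - (1-t^2)
    have hexpand : ∀ m : ℕ, (1-t^2)^(m+1) = (1-t^2)^m - t^2*(1-t^2)^m := by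
      intro m; ring
    push_cast
    ring
  have hint : ∫ t in (-1:ℝ)..1,
      (z^2*(Real.exp (z*t)*(1-t^2)^(n+2)) + ((2*(n:ℝ)+4)*(2*n+3))*(Real.exp (z*t)*(1-t^2)^(n+1))
        - ((2*(n:ℝ)+4)*(2*n+2))*(Real.exp (z*t)*(1-t^2)^n)) = 0 := by
    rw [intervalIntegral.integral_eq_sub_of_hasDerivAt hder]
    · norm_num
    · apply Continuous.intervalIntegrable
      have c0 := cont_integrand n z
      have c1 := cont_integrand (n+1) z
      have c2 := cont_integrand (n+2) z
      continuity
  rw [intervalIntegral.integral_sub, intervalIntegral.integral_add] at hint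
  · rw [intervalIntegral.integral_const_mul, intervalIntegral.integral_const_mul,
      intervalIntegral.integral_const_mul] at hint
    rw [show muI n z = ∫ t in (-1:ℝ)..1, Real.exp (z*t) * (1-t^2)^n from rfl,
        show muI (n+1) z = ∫ t in (-1:ℝ)..1, Real.exp (z*t) * (1-t^2)^(n+1) from rfl,
        show muI (n+2) z = ∫ t in (-1:ℝ)..1, Real.exp (z*t) * (1-t^2)^(n+2) from rfl]
    linarith
  · exact (continuous_const.mul (cont_integrand (n+2) z)).intervalIntegrable _ _
  · exact (continuous_const.mul (cont_integrand (n+1) z)).intervalIntegrable _ _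
  · exact ((continuous_const.mul (cont_integrand (n+2) z)).add
      (continuous_const.mul (cont_integrand (n+1) z))).intervalIntegrable _ _
  · exact (continuous_const.mul (cont_integrand n z)).intervalIntegrable _ _

lemma sbI_eq_muI {z : ℝ} (hz : 0 < z) : ∀ n : ℕ,
    sbI n z = z^n/(2^(n+1) * (Nat.factorial n)) * muI n z := by
  have key : ∀ n : ℕ, sbI n z = z^n/(2^(n+1) * (Nat.factorial n)) * muI n z ∧
      sbI (n+1) z = z^(n+1)/(2^(n+2) * (Nat.factorial (n+1))) * muI (n+1) z := by
    intro n
    induction n with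
    | zero =>
      constructor
      · show Real.sinh z / z = _
        rw [muI_zero hz, Real.sinh_eq]
        norm_num [Nat.factorial]
        ring
      · show Real.cosh z / z - Real.sinh z / z^2 = _
        rw [muI_one hz]
        norm_num [Nat.factorial]
        field_simp
    | succ n ih =>
      obtain ⟨ih0, ih1⟩ := ih
      refine ⟨ih1, ?_⟩
      rw [sbI_rec, ih0, ih1]
      have h2 : ((2*(n:ℝ)+4)*(2*n+2)) ≠ 0 := by positivity
      have hμ : muI n z = (((2*(n:ℝ)+4)*(2*n+3))*muI (n+1) z + z^2*muI (n+2) z)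
          / ((2*(n:ℝ)+4)*(2*n+2)) := by
        rw [eq_div_iff h2]
        linarith [muI_rec n z]
      rw [hμ]
      have hf1 : (Nat.factorial (n+1) : ℝ) = ((n:ℝ)+1) * Nat.factorial n := by
        rw [Nat.factorial_succ]; push_cast; ring
      have hf2 : (Nat.factorial (n+2) : ℝ) = ((n:ℝ)+2) * (((n:ℝ)+1) * Nat.factorial n) := by
        rw [Nat.factorial_succ, Nat.factorial_succ]; push_cast; ring
      have hfn : (Nat.factorial n : ℝ) ≠ 0 := by
        exact_mod_cast Nat.factorial_ne_zero n
      rw [hf1, hf2]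
      field_simp
      ring
  exact fun n => (key n).1

lemma sbI_pos {z : ℝ} (hz : 0 < z) (n : ℕ) : 0 < sbI n z := by
  rw [sbI_eq_muI hz n]
  have := muI_pos n z
  have hfn : (0:ℝ) < (Nat.factorial n : ℝ) := by exact_mod_cast Nat.factorial_pos n
  positivity

lemma sbI_ratio {z : ℝ} (hz : 0 < z) (n : ℕ) :
    (2*(n:ℝ)+3) * sbI (n+1) z < z * sbI n z := by
  have h2 := sbI_pos hz (n+2)
  rw [sbI_rec] at h2
  have h3 : (2 * ((n:ℝ) + 1) + 1) / z * sbI (n + 1) z < sbI n z := by linarith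
  have h4 : (2 * ((n:ℝ) + 1) + 1) / z * sbI (n + 1) z = (2*(n:ℝ)+3) * sbI (n+1) z / z := by
    ring
  rw [h4] at h3
  have := (div_lt_iff₀ hz).mp h3
  linarith

lemma sbI_mono2 {z : ℝ} (hz : 0 < z) (n : ℕ) : sbI (n+2) z < sbI n z := by
  have h2 := sbI_pos hz (n+1)
  have hc : 0 < (2 * ((n:ℝ) + 1) + 1) / z := by positivity
  rw [sbI_rec]
  nlinarith

noncomputable def TI (n : ℕ) (z : ℝ) : ℝ := sbI (n+1) z^2 - sbI n z * sbI (n+2) z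

lemma TI_step {z : ℝ} (hz : 0 < z) (n : ℕ) :
    TI n z = TI (n+2) z + (2*(2*(n:ℝ)+5)/z^2) * (sbI (n+2) z)^2 := by
  have e2 := sbI_rec n z
  have e3 := sbI_rec (n+1) z
  have e4 := sbI_rec (n+2) z
  rw [show n+1+2 = n+3 from rfl] at e3
  rw [show n+2+2 = n+4 from rfl] at e4
  rw [TI, TI, e4, e3, e2]
  push_cast
  field_simp
  ring

lemma sbI_half {z : ℝ} (hz : 0 < z) (n : ℕ) (hn : z ≤ (n:ℝ)) :
    sbI (n+1) z ≤ (1/2) * sbI n z := by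
  have hr := sbI_ratio hz n
  have hp := sbI_pos hz (n+1)
  have hp0 := sbI_pos hz n
  nlinarith

lemma sbI_geom {z : ℝ} (hz : 0 < z) (n : ℕ) (hn : z ≤ (n:ℝ)) (j : ℕ) :
    sbI (n+j) z ≤ (1/2)^j * sbI n z := by
  induction j with
  | zero => simp
  | succ j ih =>
    have h1 : z ≤ ((n+j : ℕ):ℝ) := by push_cast; linarith [Nat.cast_nonneg (α := ℝ) j]
    have h2 := sbI_half hz (n+j) h1
    have hp := sbI_pos hz n
    calc sbI (n+(j+1)) z = sbI ((n+j)+1) z := by ring_nf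
      _ ≤ (1/2) * sbI (n+j) z := h2
      _ ≤ (1/2) * ((1/2)^j * sbI n z) := by linarith
      _ = (1/2)^(j+1) * sbI n z := by ring

lemma TI_ge {z : ℝ} (hz : 0 < z) (m : ℕ) (J : ℕ) : TI (m + 2*J) z ≤ TI m z := by
  induction J with
  | zero => simp
  | succ J ih =>
    have hstep := TI_step hz (m + 2*J)
    have hc : (0:ℝ) ≤ 2*(2*((m+2*J : ℕ):ℝ)+5)/z^2 := by positivity
    have he : m + 2*(J+1) = (m + 2*J) + 2 := by ring
    rw [he]
    nlinarith [mul_nonneg hc (sq_nonneg (sbI ((m+2*J)+2) z))]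

lemma TI_nonneg {z : ℝ} (hz : 0 < z) (m : ℕ) : 0 ≤ TI m z := by
  by_contra hneg
  push_neg at hneg
  set ε := -TI m z with hε
  have hεpos : 0 < ε := by linarith
  set N : ℕ := Nat.ceil z with hN
  set b : ℕ := m + 2*N with hb
  have hzb : z ≤ (b:ℝ) := by
    have h1 : z ≤ (N:ℝ) := Nat.le_ceil z
    have : (N:ℝ) ≤ (b:ℝ) := by
      rw [hb]; push_cast; linarith [Nat.cast_nonneg (α := ℝ) m, Nat.cast_nonneg (α := ℝ) N]
    linarith
  set C : ℝ := sbI b z with hC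
  have hCpos : 0 < C := sbI_pos hz b
  obtain ⟨J, hJ⟩ := exists_pow_lt_of_lt_one (show (0:ℝ) < ε/C^2 by positivity)
    (show (1/4 : ℝ) < 1 by norm_num)
  -- index: m + 2*(N+J) = b + 2*J
  have hidx : m + 2*(N+J) = b + 2*J := by rw [hb]; ring
  have h1 : TI (b + 2*J) z ≤ TI m z := by rw [← hidx]; exact TI_ge hz m (N+J)
  have h2 : sbI (b + 2*J) z ≤ (1/2)^(2*J) * C := sbI_geom hz b hzb (2*J)
  have hppos := sbI_pos hz (b + 2*J)
  have h3 : -(sbI (b+2*J) z)^2 ≤ TI (b + 2*J) z := by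
    rw [TI]
    have hmono := sbI_mono2 hz (b+2*J)
    have hp1 := sbI_pos hz (b+2*J+1)
    have hp2 := sbI_pos hz (b+2*J+2)
    nlinarith
  have h4 : (sbI (b+2*J) z)^2 ≤ ((1/2)^(2*J))^2 * C^2 := by nlinarith
  have h5 : ((1/2:ℝ))^(2*J) ≤ 1 := by
    apply pow_le_one₀ <;> norm_num
  have h6 : ((1/2:ℝ))^(2*J) = (1/4:ℝ)^J := by
    rw [pow_mul]; norm_num
  have h7 : (sbI (b+2*J) z)^2 < ε := by
    have : ((1/2:ℝ)^(2*J))^2 ≤ (1/4:ℝ)^J := by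
      rw [h6]; nlinarith [pow_nonneg (show (0:ℝ) ≤ 1/4 by norm_num) J]
    have h8 : (1/4:ℝ)^J * C^2 < ε := by
      have := mul_lt_mul_of_pos_right hJ (show (0:ℝ) < C^2 by positivity)
      calc (1/4:ℝ)^J * C^2 < (ε/C^2) * C^2 := this
        _ = ε := by field_simp
    nlinarith [sq_nonneg (sbI (b+2*J) z)]
  linarith

/-- pure algebra: from Turán to the ratio lower bound. -/
lemma t_alg (z σ s i0 i1 i2 : ℝ) (hz : 0 < z) (hi0 : 0 < i0) (hi1 : 0 < i1)
    (hs : s^2 = σ^2 + z^2) (hsp : 0 < s) (hσ : 0 < σ)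
    (hrec : i2 = i0 - (2*σ/z) * i1) (hT : 0 ≤ i1^2 - i0*i2) :
    z * i0 ≤ (σ + s) * i1 := by
  have hsσ : σ < s := by nlinarith
  have hE : 0 ≤ z^2*i1^2 + 2*σ*z*i0*i1 - z^2*i0^2 := by
    have h1 : 0 ≤ z^2 * (i1^2 - i0*i2) := by positivity
    have h2 : z^2 * (i1^2 - i0*i2) = z^2*i1^2 + 2*σ*z*i0*i1 - z^2*i0^2 := by
      rw [hrec]; field_simp; ring
    linarith [h2 ▸ h1]
  have hprod : ((σ+s)*i1 - z*i0) * ((s-σ)*i1 + z*i0) = z^2*i1^2 + 2*σ*z*i0*i1 - z^2*i0^2 := by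
    nlinarith [hs]
  have hfac : 0 < (s-σ)*i1 + z*i0 := by nlinarith
  nlinarith [hE, hprod, hfac]

/-- Monotonicity in the order of the product `I_ν(z) K_ν(z)` along half-integer orders:
for every `n ≥ 2` and `z > 0`, `d_n(z) ≤ d_{n-2}(z)`. -/
theorem dCoef_le_two_back (n : ℕ) (hn : 2 ≤ n) (z : ℝ) (hz : 0 < z) :
    dCoef n z ≤ dCoef (n - 2) z := by
  obtain ⟨m, rfl⟩ : ∃ m, n = m + 2 := ⟨n - 2, by omega⟩
  have hidx : m + 2 - 2 = m := by omega
  rw [hidx]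
  set σ : ℝ := (m:ℝ) + 3/2 with hσ
  set s : ℝ := sq2 σ z with hs
  have hσpos : 0 < σ := by rw [hσ]; positivity
  have hi0 := sbI_pos hz m
  have hi1 := sbI_pos hz (m+1)
  have hk1 := sbK_pos hz (m+1)
  have hk2 := sbK_pos hz (m+2)
  have hco : (2*((m:ℝ)+1)+1) = 2*σ := by rw [hσ]; ring
  have hrecI : sbI (m+2) z = sbI m z - (2*σ/z) * sbI (m+1) z := by
    rw [sbI_rec, hco]
  have hT : 0 ≤ sbI (m+1) z^2 - sbI m z * sbI (m+2) z := TI_nonneg hz m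
  have tb : z * sbI m z ≤ (σ + s) * sbI (m+1) z :=
    t_alg z σ s (sbI m z) (sbI (m+1) z) (sbI (m+2) z)
      hz hi0 hi1 sq2_sq (sq2_pos hz) hσpos hrecI hT
  have hcast : ((m+1 : ℕ):ℝ) + 1/2 = σ := by rw [hσ]; push_cast; ring
  have kb : (σ + s) * sbK (m+1) z ≤ z * sbK (m+2) z := by
    have := (sbK_ratio hz (m+1)).1
    rw [hcast] at this
    rw [hs]
    exact this
  have key : z * (sbI m z * sbK (m+1) z) ≤ z * (sbI (m+1) z * sbK (m+2) z) := by
    calc z * (sbI m z * sbK (m+1) z) = (z * sbI m z) * sbK (m+1) z := by ring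
      _ ≤ ((σ + s) * sbI (m+1) z) * sbK (m+1) z :=
          mul_le_mul_of_nonneg_right tb hk1.le
      _ = sbI (m+1) z * ((σ + s) * sbK (m+1) z) := by ring
      _ ≤ sbI (m+1) z * (z * sbK (m+2) z) :=
          mul_le_mul_of_nonneg_left kb hi1.le
      _ = z * (sbI (m+1) z * sbK (m+2) z) := by ring
  have key' : sbI m z * sbK (m+1) z ≤ sbI (m+1) z * sbK (m+2) z :=
    le_of_mul_le_mul_left key hz
  have hexp : dCoef m z - dCoef (m+2) z
      = (2*σ) * (sbI (m+1) z * sbK (m+2) z - sbI m z * sbK (m+1) z) := by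
    rw [dCoef, dCoef, sbI_rec, sbK_rec, hco]
    field_simp
    ring
  have hnn : 0 ≤ (2*σ) * (sbI (m+1) z * sbK (m+2) z - sbI m z * sbK (m+1) z) :=
    mul_nonneg (by positivity) (by linarith)
  linarith
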